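/- arXiv:1406.2560 — 2 statements merged into one kernel-verified Lean document; each statement's English description precedes it below -/
import Mathlib

section
/- For every real L with 0 < L < 1 and every n ∈ ℕ there exists a nonzero polynomial P(x) = Σ_{j=0}^n a_j x^j with real coefficients satisfying a_0 ≥ L·Σ_{j=1}^n |a_j|, such that (x−1)^k divides P(x) for some integer k ≥ (1/5)·√((n−1)(1−L)). -/
/-!
Take the nodes `m_i = 1 + β i²` for `i < k` and let `λ_i` be the Lagrange weights for which
`∑ λ_i f(m_i) = f(0)` whenever `deg f < k`. Then `P = 1 - ∑ λ_i X^{m_i}` has a zero of order `k`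
at `1`: its `r`-th Taylor coefficient at `1` is `[r = 0] - ∑ λ_i (m_i choose r)`, and
`m ↦ m choose r` is a polynomial of degree `r`.

The quadratic spacing keeps the weights small. For `1 ≤ i ≤ K = k - 1`,
`|λ_i| = (β i²)⁻¹ ∏_{u ≠ 0, i} (1 + (β u²)⁻¹) · u² / |u² - i²|`, the first product is at most
`exp (2 / β) < 3`, and the second one equals `2 C(K, i) / C(K + i, i) ≤ 2`. Hence
`|λ_i| ≤ 6 / (β i²)`, and with `∑ λ_i = 1` we get `∑ |λ_i| ≤ 1 + 24 / β`. The choice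
`β = ⌈24 / (1 - L)⌉` makes this at most `1 / L`, and `k = ⌈√((n - 1)(1 - L)) / 5⌉` keeps the
degree `1 + β (k - 1)²` at most `n`.
-/

open Polynomial Finset

namespace Lagrange

variable {F ι : Type*} [Field F] [DecidableEq ι] {s : Finset ι} {v : ι → F}

theorem eval_basis (x : F) (i : ι) :
    (Lagrange.basis s v i).eval x = ∏ j ∈ s.erase i, (x - v j) / (v i - v j) := by
  simp only [Lagrange.basis, basisDivisor, eval_prod, eval_mul, eval_C, eval_sub, eval_X]
  exact prod_congr rfl fun _ _ ↦ inv_mul_eq_div _ _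

theorem sum_eval_basis_mul_eval (hvs : Set.InjOn v s) {f : F[X]} (hf : f.degree < #s) (x : F) :
    ∑ i ∈ s, (Lagrange.basis s v i).eval x * f.eval (v i) = f.eval x := by
  conv_rhs => rw [eq_interpolate hvs hf, interpolate_apply, eval_finsetSum]
  simp only [eval_mul, eval_C, mul_comm]

end Lagrange

section OrderOfVanishing

variable {F ι : Type*} [Field F] [CharZero F]

theorem X_sub_one_pow_dvd_one_sub_sum (s : Finset ι) (w : ι → F) (m : ι → ℕ) {k : ℕ}
    (h : ∀ f : F[X], f.degree < k → ∑ i ∈ s, w i * f.eval (m i : F) = f.eval 0) :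
    (X - 1) ^ k ∣ 1 - ∑ i ∈ s, C (w i) * X ^ m i := by
  have hsum_choose (r : ℕ) (hr : r < k) :
      ∑ i ∈ s, w i * (m i).choose r = if r = 0 then 1 else 0 := by
    have hdeg : (descPochhammer F r).degree < k := by
      rw [degree_eq_natDegree (monic_descPochhammer F r).ne_zero, descPochhammer_natDegree]
      exact_mod_cast hr
    simp_rw [Nat.cast_choose_eq_descPochhammer_div, mul_div_assoc', ← sum_div, h _ hdeg,
      descPochhammer_eval_zero]
    split_ifs with hr0 <;> simp [hr0]
  rw [← C_1, X_sub_C_pow_dvd_iff, X_pow_dvd_iff]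
  intro r hr
  simp only [C_1, sub_comp, one_comp, Polynomial.sum_comp, mul_comp, C_comp, pow_comp, X_comp,
    coeff_sub, coeff_one, finsetSum_coeff, coeff_C_mul, coeff_X_add_one_pow, hsum_choose r hr,
    sub_self]

end OrderOfVanishing

section Coefficients

variable {R ι : Type*} [Ring R]

theorem sum_abs_coeff_sum_C_mul_X_pow_le [LinearOrder R] [IsOrderedRing R]
    (s : Finset ι) (w : ι → R) (m : ι → ℕ) (t : Finset ℕ) :
    ∑ j ∈ t, |(∑ i ∈ s, C (w i) * X ^ m i).coeff j| ≤ ∑ i ∈ s, |w i| := by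
  calc ∑ j ∈ t, |(∑ i ∈ s, C (w i) * X ^ m i).coeff j|
      ≤ ∑ j ∈ t, ∑ i ∈ s, |if j = m i then w i else 0| := by
        simp only [finsetSum_coeff, coeff_C_mul_X_pow]
        exact sum_le_sum fun j _ ↦ abs_sum_le_sum_abs _ _
    _ = ∑ i ∈ s, if m i ∈ t then |w i| else 0 := by
        rw [sum_comm]
        simp only [apply_ite, abs_zero, sum_ite_eq']
    _ ≤ ∑ i ∈ s, |w i| := sum_le_sum fun i _ ↦ by split_ifs <;> simp

theorem coeff_zero_one_sub_sum_C_mul_X_pow {s : Finset ι} {m : ι → ℕ} (w : ι → R)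
    (hm : ∀ i ∈ s, m i ≠ 0) : (1 - ∑ i ∈ s, C (w i) * X ^ m i).coeff 0 = 1 := by
  simp only [coeff_sub, coeff_one_zero, finsetSum_coeff, coeff_C_mul_X_pow]
  rw [sum_eq_zero fun i hi ↦ if_neg (hm i hi).symm, sub_zero]

theorem natDegree_one_sub_sum_C_mul_X_pow_le {s : Finset ι} {m : ι → ℕ} {n : ℕ} (w : ι → R)
    (hm : ∀ i ∈ s, m i ≤ n) : (1 - ∑ i ∈ s, C (w i) * X ^ m i).natDegree ≤ n := by
  refine (natDegree_sub_le _ _).trans (max_le (by simp) (natDegree_sum_le_of_forall_le _ _ ?_))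
  exact fun i hi ↦ (natDegree_C_mul_X_pow_le _ _).trans (hm i hi)

theorem sum_abs_coeff_one_sub_sum_C_mul_X_pow_le [LinearOrder R] [IsOrderedRing R]
    (s : Finset ι) (w : ι → R) (m : ι → ℕ) (n : ℕ) :
    ∑ j ∈ Icc 1 n, |(1 - ∑ i ∈ s, C (w i) * X ^ m i).coeff j| ≤ ∑ i ∈ s, |w i| := by
  refine le_of_eq_of_le (sum_congr rfl fun j hj ↦ ?_) (sum_abs_coeff_sum_C_mul_X_pow_le s w m _)
  rw [coeff_sub, coeff_one, if_neg (by grind), zero_sub, abs_neg]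

end Coefficients

theorem prod_Ioc_div_add (i K : ℕ) :
    ∏ u ∈ Ioc 0 K, (u : ℝ) / (u + i) = ((K + i).choose i : ℝ)⁻¹ := by
  induction K with
  | zero => simp
  | succ K ih =>
    have h := Nat.choose_mul_succ_eq (K + i) i
    rw [show K + i + 1 - i = K + 1 by omega] at h
    rw [prod_Ioc_succ_top K.zero_le, ih, show K + 1 + i = K + i + 1 by ring]
    have : ((K + i + 1).choose i : ℝ) ≠ 0 := by exact_mod_cast (Nat.choose_pos (by omega)).ne'
    have : ((K + i).choose i : ℝ) ≠ 0 := by exact_mod_cast (Nat.choose_pos (by omega)).ne'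
    have h' : ((K + i + 1).choose i : ℝ) * (K + 1) = (K + i).choose i * (K + i + 1) := by
      exact_mod_cast h.symm
    field_simp
    push_cast
    linear_combination h'

theorem prod_Ioc_div_sub {i K : ℕ} (hiK : i ≤ K) :
    ∏ u ∈ Ioc i K, (u : ℝ) / (u - i) = K.choose i := by
  induction K, hiK using Nat.le_induction with
  | base => simp
  | succ K hiK ih =>
    have h := Nat.choose_mul_succ_eq K i
    rw [prod_Ioc_succ_top hiK, ih]
    have : (K + 1 - i : ℝ) ≠ 0 := by
      have : (i : ℝ) ≤ K := by exact_mod_cast hiK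
      linarith
    have h' : (K.choose i : ℝ) * (K + 1) = (K + 1).choose i * (K + 1 - i) := by
      have := congrArg (Nat.cast : ℕ → ℝ) h
      push_cast [Nat.cast_sub (by omega : i ≤ K + 1)] at this
      exact this
    push_cast
    rw [mul_div_assoc', div_eq_iff this]
    linear_combination h'

theorem prod_Ico_div_sub (i : ℕ) : ∏ u ∈ Ico 1 i, (u : ℝ) / (i - u) = 1 := by
  have hrefl : ∏ u ∈ Ico 1 i, ((i - u : ℕ) : ℝ) = ∏ u ∈ Ico 1 i, (u : ℝ) :=
    (prod_Ico_reflect (fun u ↦ (u : ℝ)) 1 (by omega)).trans (by simp)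
  rw [prod_div_distrib, ← prod_congr rfl fun u hu ↦ Nat.cast_sub (mem_Ico.1 hu).2.le, hrefl]
  exact div_self (prod_ne_zero_iff.2 fun u hu ↦ by have := (mem_Ico.1 hu).1; positivity)

theorem prod_erase_sq_div_abs_sq_sub_sq {i K : ℕ} (hi : 1 ≤ i) (hiK : i ≤ K) :
    ∏ u ∈ (Ioc 0 K).erase i, (u : ℝ) ^ 2 / |(u : ℝ) ^ 2 - i ^ 2| =
      2 * K.choose i / (K + i).choose i := by
  have hfactor (u : ℕ) :
      (u : ℝ) ^ 2 / |(u : ℝ) ^ 2 - i ^ 2| = u / |(u : ℝ) - i| * (u / (u + i)) := by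
    rw [sq_sub_sq, abs_mul, abs_of_nonneg (by positivity : (0 : ℝ) ≤ u + i), mul_comm,
      ← mul_div_mul_comm, sq]
  have hadd : ∏ u ∈ (Ioc 0 K).erase i, (u : ℝ) / (u + i) = 2 / (K + i).choose i := by
    have h := prod_erase_mul (Ioc 0 K) (fun u : ℕ ↦ (u : ℝ) / (u + i)) (a := i) (by simp; omega)
    have hhalf : (i : ℝ) / (i + i) = 1 / 2 := by
      have : (i : ℝ) ≠ 0 := by positivity
      field_simp
      ring
    rw [hhalf, prod_Ioc_div_add] at h
    rw [div_eq_mul_inv, ← h]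
    ring
  have hsub : ∏ u ∈ (Ioc 0 K).erase i, (u : ℝ) / |(u : ℝ) - i| = K.choose i := by
    have hsplit : (Ioc 0 K).erase i = Ico 1 i ∪ Ioc i K := by ext; simp; omega
    have hlower : ∀ u ∈ Ico 1 i, (u : ℝ) / |(u : ℝ) - i| = u / (i - u) := fun u hu ↦ by
      have : (u : ℝ) < i := by exact_mod_cast (mem_Ico.1 hu).2
      rw [abs_of_neg (sub_neg.2 this), neg_sub]
    have hupper : ∀ u ∈ Ioc i K, (u : ℝ) / |(u : ℝ) - i| = u / (u - i) := fun u hu ↦ by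
      have : (i : ℝ) < u := by exact_mod_cast (mem_Ioc.1 hu).1
      rw [abs_of_pos (sub_pos.2 this)]
    rw [hsplit, prod_union (disjoint_left.2 fun u h₁ h₂ ↦ by simp at h₁ h₂; omega),
      prod_congr rfl hlower, prod_congr rfl hupper, prod_Ico_div_sub, prod_Ioc_div_sub hiK, one_mul]
  rw [prod_congr rfl fun u _ ↦ hfactor u, prod_mul_distrib, hsub, hadd, mul_div_assoc', mul_comm]

theorem prod_erase_sq_div_abs_sq_sub_sq_le_two {i K : ℕ} (hi : 1 ≤ i) (hiK : i ≤ K) :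
    ∏ u ∈ (Ioc 0 K).erase i, (u : ℝ) ^ 2 / |(u : ℝ) ^ 2 - i ^ 2| ≤ 2 := by
  rw [prod_erase_sq_div_abs_sq_sub_sq hi hiK, mul_div_assoc]
  refine mul_le_of_le_one_right zero_le_two (div_le_one_of_le₀ ?_ (Nat.cast_nonneg _))
  exact_mod_cast Nat.choose_le_choose i (K.le_add_right i)

theorem sum_Ioc_inv_sq_le_two (K : ℕ) : ∑ u ∈ Ioc 0 K, ((u : ℝ) ^ 2)⁻¹ ≤ 2 := by
  have h : Ioc 0 K = Ioo 0 (K + 1) := by ext; simp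
  simpa [h] using sum_Ioo_inv_sq_le (α := ℝ) 0 (K + 1)

theorem prod_one_add_inv_mul_sq_le_three {β K : ℕ} (hβ : 2 ≤ β) {s : Finset ℕ}
    (hs : s ⊆ Ioc 0 K) :
    ∏ u ∈ s, (1 + ((β : ℝ) * u ^ 2)⁻¹) ≤ 3 := by
  have hsum : ∑ u ∈ s, ((β : ℝ) * u ^ 2)⁻¹ ≤ 1 := by
    have hβ' : (2 : ℝ) ≤ β := by exact_mod_cast hβ
    calc ∑ u ∈ s, ((β : ℝ) * u ^ 2)⁻¹ ≤ ∑ u ∈ Ioc 0 K, ((β : ℝ) * u ^ 2)⁻¹ :=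
          sum_le_sum_of_subset_of_nonneg hs fun _ _ _ ↦ by positivity
      _ = (β : ℝ)⁻¹ * ∑ u ∈ Ioc 0 K, ((u : ℝ) ^ 2)⁻¹ := by simp only [mul_inv, mul_sum]
      _ ≤ 2⁻¹ * 2 := by gcongr; exact sum_Ioc_inv_sq_le_two K
      _ = 1 := by norm_num
  calc ∏ u ∈ s, (1 + ((β : ℝ) * u ^ 2)⁻¹) ≤ ∏ u ∈ s, Real.exp ((β : ℝ) * u ^ 2)⁻¹ :=
        prod_le_prod (fun _ _ ↦ by positivity) fun u _ ↦ by
          linarith [Real.add_one_le_exp ((β : ℝ) * u ^ 2)⁻¹]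
    _ = Real.exp (∑ u ∈ s, ((β : ℝ) * u ^ 2)⁻¹) := (Real.exp_sum _ _).symm
    _ ≤ Real.exp 1 := Real.exp_le_exp.2 hsum
    _ ≤ 3 := by linarith [Real.exp_one_lt_d9]

def quadNode (β u : ℕ) : ℕ := 1 + β * u ^ 2

noncomputable def quadWeight (β k i : ℕ) : ℝ :=
  (Lagrange.basis (range k) (fun u ↦ (quadNode β u : ℝ)) i).eval 0

noncomputable def quadNodePoly (β k : ℕ) : ℝ[X] :=
  1 - ∑ i ∈ range k, C (quadWeight β k i) * X ^ quadNode β i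

theorem quadNode_injective {β : ℕ} (hβ : 0 < β) : Function.Injective (quadNode β) := fun u v h ↦ by
  simp only [quadNode, add_right_inj, mul_right_inj' hβ.ne'] at h
  exact Nat.pow_left_injective two_ne_zero h

theorem sum_quadWeight_mul_eval {β k : ℕ} (hβ : 0 < β) {f : ℝ[X]} (hf : f.degree < k) :
    ∑ i ∈ range k, quadWeight β k i * f.eval (quadNode β i : ℝ) = f.eval 0 :=
  Lagrange.sum_eval_basis_mul_eval (Nat.cast_injective.comp (quadNode_injective hβ)).injOn
    (by rwa [card_range]) 0

theorem X_sub_one_pow_dvd_quadNodePoly {β : ℕ} (hβ : 0 < β) (k : ℕ) :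
    (X - 1) ^ k ∣ quadNodePoly β k :=
  X_sub_one_pow_dvd_one_sub_sum _ _ _ fun _ hf ↦ sum_quadWeight_mul_eval hβ hf

theorem abs_quadWeight_le {β i K : ℕ} (hβ : 2 ≤ β) (hi : 1 ≤ i) (hiK : i ≤ K) :
    |quadWeight β (K + 1) i| ≤ 6 / (β * i ^ 2) := by
  have hβ0 : (0 : ℝ) < β := by positivity
  have hsplit : (range (K + 1)).erase i = insert 0 ((Ioc 0 K).erase i) := by ext; simp; omega
  have hfactor : ∀ u ∈ (Ioc 0 K).erase i, |(0 - quadNode β u) / (quadNode β i - quadNode β u : ℝ)|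
      = (1 + ((β : ℝ) * u ^ 2)⁻¹) * ((u : ℝ) ^ 2 / |(u : ℝ) ^ 2 - i ^ 2|) := fun u hu ↦ by
    have hu : (u : ℝ) ≠ 0 := by have := (mem_Ioc.1 (mem_of_mem_erase hu)).1; positivity
    simp only [quadNode, Nat.cast_add, Nat.cast_one, Nat.cast_mul, Nat.cast_pow]
    rw [abs_div, zero_sub, abs_neg, abs_of_pos (by positivity), add_sub_add_left_eq_sub,
      ← mul_sub, abs_mul, abs_of_pos hβ0, abs_sub_comm]
    field_simp
    ring
  have hzero : |(0 - quadNode β 0) / (quadNode β i - quadNode β 0 : ℝ)| = 1 / (β * i ^ 2) := by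
    have : (0 : ℝ) < β * i ^ 2 := by positivity
    simp [quadNode, abs_div, abs_of_pos this]
  rw [quadWeight, Lagrange.eval_basis, abs_prod, hsplit, prod_insert (by simp), hzero,
    prod_congr rfl hfactor, prod_mul_distrib]
  calc 1 / ((β : ℝ) * i ^ 2) * ((∏ u ∈ (Ioc 0 K).erase i, (1 + ((β : ℝ) * u ^ 2)⁻¹)) *
        ∏ u ∈ (Ioc 0 K).erase i, (u : ℝ) ^ 2 / |(u : ℝ) ^ 2 - i ^ 2|)
      ≤ 1 / ((β : ℝ) * i ^ 2) * (3 * 2) := by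
        gcongr
        · exact prod_one_add_inv_mul_sq_le_three hβ (erase_subset _ _)
        · exact prod_erase_sq_div_abs_sq_sub_sq_le_two hi hiK
    _ = 6 / ((β : ℝ) * i ^ 2) := by ring

theorem sum_abs_quadWeight_le {β : ℕ} (hβ : 2 ≤ β) (k : ℕ) :
    ∑ i ∈ range k, |quadWeight β k i| ≤ 1 + 24 / β := by
  rcases k with _ | K
  · simp only [range_zero, sum_empty]
    positivity
  have hS : ∑ i ∈ Ioc 0 K, |quadWeight β (K + 1) i| ≤ 12 / β :=
    calc ∑ i ∈ Ioc 0 K, |quadWeight β (K + 1) i| ≤ ∑ i ∈ Ioc 0 K, 6 / ((β : ℝ) * i ^ 2) :=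
          sum_le_sum fun i hi ↦ abs_quadWeight_le hβ (mem_Ioc.1 hi).1 (mem_Ioc.1 hi).2
      _ = 6 / β * ∑ i ∈ Ioc 0 K, ((i : ℝ) ^ 2)⁻¹ := by
          simp only [mul_sum, div_eq_mul_inv, mul_inv, mul_assoc]
      _ ≤ 6 / β * 2 := by gcongr; exact sum_Ioc_inv_sq_le_two K
      _ = 12 / β := by ring
  have hsum : ∑ i ∈ range (K + 1), quadWeight β (K + 1) i = 1 := by
    simpa using sum_quadWeight_mul_eval (k := K + 1) (by omega) (f := 1)
      (by rw [degree_one]; exact_mod_cast K.succ_pos)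
  have hrange : range (K + 1) = insert 0 (Ioc 0 K) := by ext; simp
  rw [hrange, sum_insert (by simp)] at hsum ⊢
  have h0 : |quadWeight β (K + 1) 0| ≤ 1 + ∑ i ∈ Ioc 0 K, |quadWeight β (K + 1) i| := by
    rw [eq_sub_of_add_eq hsum]
    exact (abs_sub _ _).trans (by rw [abs_one]; gcongr; exact abs_sum_le_sum_abs _ _)
  linarith [show (24 : ℝ) / β = 12 / β + 12 / β by ring]

theorem quadNode_le_of_lt {L : ℝ} (hL0 : 0 ≤ L) (hL : L < 1) {n i : ℕ}
    (hi : (i : ℝ) < 1 / 5 * √((n - 1) * (1 - L))) : quadNode ⌈24 / (1 - L)⌉₊ i ≤ n := by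
  have h1L : 0 < 1 - L := sub_pos.2 hL
  have hsq : 25 * (i : ℝ) ^ 2 < (n - 1) * (1 - L) := by
    have := (Real.lt_sqrt (by positivity)).1 (show 5 * (i : ℝ) < √((n - 1) * (1 - L)) by linarith)
    linarith
  have hβ : (⌈24 / (1 - L)⌉₊ : ℝ) * (1 - L) < 25 := by
    have := Nat.ceil_lt_add_one (div_pos (by norm_num : (0 : ℝ) < 24) h1L).le
    rw [← sub_lt_iff_lt_add, lt_div_iff₀ h1L] at this
    linarith
  suffices (quadNode ⌈24 / (1 - L)⌉₊ i : ℝ) ≤ n by exact_mod_cast this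
  push_cast [quadNode]
  nlinarith [mul_le_mul_of_nonneg_right hβ.le (sq_nonneg (i : ℝ))]

theorem stmt11 (L : ℝ) (hL0 : 0 < L) (hL : L < 1) (n : ℕ) :
    ∃ P : Polynomial ℝ, P ≠ 0 ∧ P.natDegree ≤ n ∧
      P.coeff 0 ≥ L * ∑ j ∈ Finset.Icc 1 n, |P.coeff j| ∧
      ∃ k : ℕ, (k : ℝ) ≥ (1/5) * Real.sqrt (((n : ℝ) - 1) * (1 - L)) ∧ (X - 1) ^ k ∣ P := by
  set β := ⌈24 / (1 - L)⌉₊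
  set k := ⌈(1/5) * Real.sqrt (((n : ℝ) - 1) * (1 - L))⌉₊
  have h1L : 0 < 1 - L := sub_pos.2 hL
  have hβ : 24 ≤ (β : ℝ) * (1 - L) := (div_le_iff₀ h1L).1 (Nat.le_ceil _)
  have hβ2 : 2 ≤ β := by
    have : (2 : ℝ) < β := by nlinarith
    exact_mod_cast this.le
  have hcoeff0 : (quadNodePoly β k).coeff 0 = 1 :=
    coeff_zero_one_sub_sum_C_mul_X_pow _ fun i _ ↦ by simp [quadNode]
  have hdeg : ∀ i ∈ range k, quadNode β i ≤ n := fun i hi ↦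
    quadNode_le_of_lt hL0.le hL (Nat.lt_ceil.1 (mem_range.1 hi))
  refine ⟨quadNodePoly β k, fun h ↦ by simp [h] at hcoeff0,
    natDegree_one_sub_sum_C_mul_X_pow_le _ hdeg, ?_, k, Nat.le_ceil _,
    X_sub_one_pow_dvd_quadNodePoly (by omega) k⟩
  have h24 : 24 / (β : ℝ) ≤ 1 - L := (div_le_iff₀' (by positivity)).2 hβ
  rw [hcoeff0, ge_iff_le]
  calc L * ∑ j ∈ Icc 1 n, |(quadNodePoly β k).coeff j| ≤ L * (1 + 24 / β) :=
        mul_le_mul_of_nonneg_left ((sum_abs_coeff_one_sub_sum_C_mul_X_pow_le _ _ _ n).trans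
          (sum_abs_quadWeight_le hβ2 k)) hL0.le
    _ ≤ 1 := by nlinarith [mul_le_mul_of_nonneg_left h24 hL0.le]
end

section
/- For every n ∈ ℕ and every real K with 1 < K < 2 there exists a polynomial F with real coefficients of degree m ≤ √(n(K−1)/2) + 1 such that |F(0)| > K·max_{j ∈ {1,2,…,n}} |F(j)|. -/
/-!
Transport the Chebyshev polynomial `T_m` affinely from `[-1, 1]` onto `[1, 1 + n]`, sending `0`
to `a = 1 + 2 / n`. The new polynomial is bounded by `1` at `1, …, n`, while at `0` it equals
`T_m(a) = cosh (m t)` with `cosh t = a`. Superadditivity of `sinh` on `[0, ∞)` gives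
`cosh (m t) - 1 = 2 sinh² (m t / 2) ≥ 2 m² sinh² (t / 2) = m² (a - 1) = 2 m² / n`,
which exceeds `K - 1` as soon as `m² > n (K - 1) / 2`; the choice
`m = ⌊√(n (K - 1) / 2)⌋ + 1` does this.
-/

open Polynomial Real

namespace Real

theorem natCast_mul_sinh_le_sinh_natCast_mul {x : ℝ} (hx : 0 ≤ x) (m : ℕ) :
    m * sinh x ≤ sinh (m * x) := by
  induction m with
  | zero => simp
  | succ m ih =>
    have h₁ : sinh x ≤ cosh (m * x) * sinh x :=
      le_mul_of_one_le_left (sinh_nonneg_iff.2 hx) (one_le_cosh _)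
    have h₂ : sinh (m * x) ≤ sinh (m * x) * cosh x :=
      le_mul_of_one_le_right (sinh_nonneg_iff.2 (by positivity)) (one_le_cosh _)
    rw [Nat.cast_succ, add_one_mul, add_one_mul, sinh_add]
    linarith

theorem cosh_sub_one_eq_two_mul_sinh_half_sq (x : ℝ) : cosh x - 1 = 2 * sinh (x / 2) ^ 2 := by
  conv_lhs => rw [← add_halves x, ← two_mul, cosh_two_mul, cosh_sq]
  ring

theorem natCast_sq_mul_cosh_sub_one_le {x : ℝ} (hx : 0 ≤ x) (m : ℕ) :
    m ^ 2 * (cosh x - 1) ≤ cosh (m * x) - 1 := by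
  have hx₂ : 0 ≤ x / 2 := by linarith
  have h := natCast_mul_sinh_le_sinh_natCast_mul hx₂ m
  have h₀ : 0 ≤ m * sinh (x / 2) := mul_nonneg m.cast_nonneg (sinh_nonneg_iff.2 hx₂)
  rw [cosh_sub_one_eq_two_mul_sinh_half_sq, cosh_sub_one_eq_two_mul_sinh_half_sq, mul_div_assoc]
  nlinarith [mul_self_le_mul_self h₀ h]

end Real

theorem abs_one_sub_div_mul_le_one {x L : ℝ} (hx₀ : 0 ≤ x) (hxL : x ≤ L) :
    |1 - 2 / L * x| ≤ 1 := by
  have h₀ : 0 ≤ 2 / L * x := mul_nonneg (div_nonneg zero_le_two (hx₀.trans hxL)) hx₀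
  have h₂ : 2 / L * x ≤ 2 := by
    rw [div_mul_eq_mul_div]
    exact div_le_of_le_mul₀ (hx₀.trans hxL) zero_le_two (by linarith)
  rw [abs_le]
  constructor <;> linarith

namespace Polynomial.Chebyshev

theorem one_add_sq_mul_sub_one_le_eval_T_real (m : ℕ) {a : ℝ} (ha : 1 ≤ a) :
    1 + m ^ 2 * (a - 1) ≤ (T ℝ m).eval a := by
  have h := natCast_sq_mul_cosh_sub_one_le (arcosh_nonneg ha) m
  have hT : (T ℝ m).eval a = cosh (m * arcosh a) := by
    simpa [cosh_arcosh ha] using T_real_cosh (arcosh a) m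
  rw [cosh_arcosh ha] at h
  linarith

theorem exists_natDegree_le_abs_eval_le_one_on_Icc_one_add_le_eval_zero (m : ℕ) {L : ℝ}
    (hL : 0 ≤ L) : ∃ F : ℝ[X], F.natDegree ≤ m ∧ 1 + 2 * m ^ 2 / L ≤ F.eval 0 ∧
      ∀ x ∈ Set.Icc 1 (1 + L), |F.eval x| ≤ 1 := by
  obtain ⟨ℓ, hℓ_deg, hℓ_eval⟩ :
      ∃ ℓ : ℝ[X], ℓ.natDegree ≤ 1 ∧ ∀ x, ℓ.eval x = 1 - 2 / L * (x - 1) :=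
    ⟨1 - Polynomial.C (2 / L) * (X - 1), by compute_degree, by simp⟩
  refine ⟨(T ℝ m).comp ℓ, ?_, ?_, fun x ⟨hx₁, hx₂⟩ ↦ ?_⟩
  · simpa using natDegree_comp_le.trans (Nat.mul_le_mul (natDegree_T ℝ m).le hℓ_deg)
  · rw [eval_comp, hℓ_eval]
    calc 1 + 2 * m ^ 2 / L = 1 + m ^ 2 * (1 - 2 / L * (0 - 1) - 1) := by ring
      _ ≤ _ := one_add_sq_mul_sub_one_le_eval_T_real m (by simp; positivity)
  · rw [eval_comp, hℓ_eval]
    exact abs_eval_T_real_le_one _ (abs_one_sub_div_mul_le_one (by linarith) (by linarith))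

end Polynomial.Chebyshev

open Chebyshev in
theorem stmt18_general (n : ℕ) (K : ℝ) (hK1 : 1 < K) :
    ∃ F : Polynomial ℝ,
      (F.natDegree : ℝ) ≤ Real.sqrt (n * (K - 1) / 2) + 1 ∧
      ∀ j ∈ Finset.Icc 1 n, |F.eval 0| > K * |F.eval (j : ℝ)| := by
  set m := ⌊√(n * (K - 1) / 2)⌋₊ + 1
  have hm : n * (K - 1) / 2 < m ^ 2 := lt_sq_of_sqrt_lt (by exact_mod_cast Nat.lt_floor_add_one _)
  obtain ⟨F, hF_deg, hF_zero, hF_Icc⟩ :=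
    exists_natDegree_le_abs_eval_le_one_on_Icc_one_add_le_eval_zero m n.cast_nonneg
  refine ⟨F, ?_, fun j hj ↦ ?_⟩
  · calc (F.natDegree : ℝ) ≤ m := by exact_mod_cast hF_deg
      _ ≤ √(n * (K - 1) / 2) + 1 := by
        push_cast [m]; linarith [Nat.floor_le (sqrt_nonneg (n * (K - 1) / 2))]
  obtain ⟨hj₁, hjn⟩ := Finset.mem_Icc.1 hj
  have hn : (0 : ℝ) < n := by exact_mod_cast hj₁.trans hjn
  have hK_lt : K < F.eval 0 :=
    calc K = 1 + 2 * (n * (K - 1) / 2) / n := by field_simp; ring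
      _ < 1 + 2 * m ^ 2 / n := by gcongr
      _ ≤ F.eval 0 := hF_zero
  have hjn' : (j : ℝ) ≤ n := by exact_mod_cast hjn
  have hF_j : |F.eval (j : ℝ)| ≤ 1 := hF_Icc j ⟨by exact_mod_cast hj₁, by linarith⟩
  calc K * |F.eval (j : ℝ)| ≤ K := mul_le_of_le_one_right (by linarith) hF_j
    _ < |F.eval 0| := hK_lt.trans_le (le_abs_self _)

theorem stmt18 (n : ℕ) (K : ℝ) (hK1 : 1 < K) (hK : K < 2) :
    ∃ F : Polynomial ℝ,
      (F.natDegree : ℝ) ≤ Real.sqrt (n * (K - 1) / 2) + 1 ∧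
      ∀ j ∈ Finset.Icc 1 n, |F.eval 0| > K * |F.eval (j : ℝ)| :=
  stmt18_general n K hK1
end
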